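/- If each F_j is the proximal map of a convex differentiable f_j and the F_j are stacked into F acting componentwise, then at any MACE solution x* (with all components equal to x* and G the simple averaging operator), the consensus condition F(x*) = G(x*) implies Σ_{j=0}^{J-1} ∇f_j(x*) = 0, i.e., x* minimizes Σ_j f_j. -/

import Mathlib

/-!
The optimality condition of the proximal problem at its minimizer `x̄ = F_j(x_j)` reads
`∇f_j(x̄) = (x_j - x̄) / σ²`. Summing over `j`, the deviations from the average cancel, so
`Σ_j ∇f_j(x̄) = 0`; by convexity, `f_j(x̄) + ⟪∇f_j(x̄), y - x̄⟫ ≤ f_j(y)`, and summing these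
first-order inequalities shows that `x̄` minimizes `Σ_j f_j`.
-/

open scoped RealInnerProductSpace
open Finset

theorem Finset.sum_sub_inv_card_smul_sum {ι 𝕜 M : Type*} [DivisionRing 𝕜] [CharZero 𝕜]
    [AddCommGroup M] [Module 𝕜 M] (s : Finset ι) (x : ι → M) :
    ∑ i ∈ s, (x i - (#s : 𝕜)⁻¹ • ∑ j ∈ s, x j) = 0 := by
  rcases s.eq_empty_or_nonempty with rfl | hs
  · simp
  rw [sum_sub_distrib, sum_const, ← Nat.cast_smul_eq_nsmul 𝕜, smul_smul,
    mul_inv_cancel₀ (by simpa using hs.ne_empty), one_smul, sub_self]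

theorem ConvexOn.add_apply_sub_le_of_hasFDerivAt {E : Type*} [NormedAddCommGroup E]
    [NormedSpace ℝ E] {f : E → ℝ} {f' : E →L[ℝ] ℝ} {x : E} (hf : ConvexOn ℝ Set.univ f)
    (hx : HasFDerivAt f f' x) (y : E) : f x + f' (y - x) ≤ f y := by
  have hline : ConvexOn ℝ Set.univ (f ∘ AffineMap.lineMap (k := ℝ) x y) := by
    simpa using hf.comp_affineMap (AffineMap.lineMap x y)
  have hderiv : HasDerivAt (f ∘ AffineMap.lineMap (k := ℝ) x y) (f' (y - x)) 0 :=
    hx.comp_hasDerivAt_of_eq 0 AffineMap.hasDerivAt_lineMap (by simp)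
  have hslope := hline.le_slope_of_hasDerivAt (Set.mem_univ 0) (Set.mem_univ 1) zero_lt_one hderiv
  simp only [slope_def_field, Function.comp_apply, AffineMap.lineMap_apply_zero,
    AffineMap.lineMap_apply_one, sub_zero, div_one] at hslope
  linarith

section InnerProductSpace

variable {E : Type*} [NormedAddCommGroup E] [InnerProductSpace ℝ E] [CompleteSpace E]

theorem ConvexOn.add_inner_sub_le_of_hasGradientAt {f : E → ℝ} {g x : E}
    (hf : ConvexOn ℝ Set.univ f) (hg : HasGradientAt f g x) (y : E) :
    f x + ⟪g, y - x⟫ ≤ f y := by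
  simpa using hf.add_apply_sub_le_of_hasFDerivAt (hasGradientAt_iff_hasFDerivAt.1 hg) y

theorem sum_le_sum_of_convexOn_of_sum_gradient_eq_zero {ι : Type*} (s : Finset ι)
    {f : ι → E → ℝ} {g : ι → E} {x : E} (hf : ∀ i ∈ s, ConvexOn ℝ Set.univ (f i))
    (hg : ∀ i ∈ s, HasGradientAt (f i) (g i) x) (hsum : ∑ i ∈ s, g i = 0) (y : E) :
    ∑ i ∈ s, f i x ≤ ∑ i ∈ s, f i y :=
  calc ∑ i ∈ s, f i x = ∑ i ∈ s, (f i x + ⟪g i, y - x⟫) := by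
        rw [sum_add_distrib, ← sum_inner, hsum, inner_zero_left, add_zero]
    _ ≤ ∑ i ∈ s, f i y :=
        sum_le_sum fun i hi => (hf i hi).add_inner_sub_le_of_hasGradientAt (hg i hi) y

theorem gradient_eq_of_isMinOn_add_norm_sub_sq {f : E → ℝ} {g p v : E} {t : ℝ}
    (hmin : IsMinOn (fun u => f u + ‖u - v‖ ^ 2 / (2 * t)) Set.univ p)
    (hg : HasGradientAt f g p) : g = t⁻¹ • (v - p) := by
  have hq : HasFDerivAt (fun u => ‖u - v‖ ^ 2 / (2 * t))
      ((2 * t)⁻¹ • (2 : ℕ) • innerSL ℝ (p - v)) p := by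
    simpa [div_eq_mul_inv, mul_comm] using
      ((hasFDerivAt_id p).sub_const v).norm_sq.mul_const (2 * t)⁻¹
  have hzero := (hmin.isLocalMin Filter.univ_mem).hasFDerivAt_eq_zero
    ((hasGradientAt_iff_hasFDerivAt.1 hg).add hq)
  refine ext_inner_right ℝ fun w => ?_
  have hw := congrArg (· w) hzero
  simp only [add_apply, smul_apply,
    InnerProductSpace.toDual_apply_apply, innerSL_apply_apply, inner_sub_left, smul_eq_mul,
    nsmul_eq_mul, Nat.cast_ofNat, zero_apply] at hw
  rw [real_inner_smul_left, inner_sub_left]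
  linear_combination hw

end InnerProductSpace

theorem mace_prox_consensus_minimizes_sum_general
    (J n : ℕ)
    (f : Fin J → EuclideanSpace ℝ (Fin n) → ℝ)
    (hconv : ∀ j, ConvexOn ℝ Set.univ (f j))
    (g : Fin J → EuclideanSpace ℝ (Fin n) → EuclideanSpace ℝ (Fin n))
    (hg : ∀ j x, HasGradientAt (f j) (g j x) x)
    (σ : ℝ)
    (F : Fin J → EuclideanSpace ℝ (Fin n) → EuclideanSpace ℝ (Fin n))
    (hF : ∀ j v u, f j (F j v) + ‖F j v - v‖ ^ 2 / (2 * σ ^ 2)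
            ≤ f j u + ‖u - v‖ ^ 2 / (2 * σ ^ 2))
    (x : Fin J → EuclideanSpace ℝ (Fin n))
    (xbar : EuclideanSpace ℝ (Fin n))
    (hxbar : xbar = (J : ℝ)⁻¹ • ∑ j, x j)
    (hMACE : ∀ j, F j (x j) = xbar) :
    (∑ j, g j xbar = 0) ∧ ∀ y, ∑ j, f j xbar ≤ ∑ j, f j y := by
  have hgrad (j : Fin J) : g j xbar = (σ ^ 2)⁻¹ • (x j - xbar) :=
    gradient_eq_of_isMinOn_add_norm_sub_sq
      (isMinOn_univ_iff.2 fun u => by simpa only [hMACE j] using hF j (x j) u) (hg j xbar)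
  have hdev : ∑ j, (x j - xbar) = 0 := by
    simpa [hxbar] using sum_sub_inv_card_smul_sum (𝕜 := ℝ) univ x
  have hsum : ∑ j, g j xbar = 0 := by
    simp only [hgrad, ← smul_sum, hdev, smul_zero]
  exact ⟨hsum, sum_le_sum_of_convexOn_of_sum_gradient_eq_zero univ (fun j _ => hconv j)
    (fun j _ => hg j xbar) hsum⟩

theorem mace_prox_consensus_minimizes_sum
    (J n : ℕ) (hJ : 0 < J)
    (f : Fin J → EuclideanSpace ℝ (Fin n) → ℝ)
    (hconv : ∀ j, ConvexOn ℝ Set.univ (f j))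
    (g : Fin J → EuclideanSpace ℝ (Fin n) → EuclideanSpace ℝ (Fin n))
    (hg : ∀ j x, HasGradientAt (f j) (g j x) x)
    (σ : ℝ) (hσ : 0 < σ)
    (F : Fin J → EuclideanSpace ℝ (Fin n) → EuclideanSpace ℝ (Fin n))
    (hF : ∀ j v u, f j (F j v) + ‖F j v - v‖ ^ 2 / (2 * σ ^ 2)
            ≤ f j u + ‖u - v‖ ^ 2 / (2 * σ ^ 2))
    (x : Fin J → EuclideanSpace ℝ (Fin n))
    (xbar : EuclideanSpace ℝ (Fin n))
    (hxbar : xbar = (J : ℝ)⁻¹ • ∑ j, x j)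
    (hMACE : ∀ j, F j (x j) = xbar) :
    (∑ j, g j xbar = 0) ∧ ∀ y, ∑ j, f j xbar ≤ ∑ j, f j y :=
  mace_prox_consensus_minimizes_sum_general J n f hconv g hg σ F hF x xbar hxbar hMACE
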